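/- Let X ∈ 𝕊ℙ_n. Then the matrix I + X is invertible. Moreover, for every symmetric Z ∈ ℝ^{n×n}, setting α = (I + X)⁻¹ Z𝟙, the matrix Π_X(Z) = Z − (α𝟙ᵀ + 𝟙αᵀ) ⊙ X is symmetric and satisfies Π_X(Z)𝟙 = 0, and the residual Z − Π_X(Z) is orthogonal, in the Fisher metric at X, to every symmetric matrix W with W𝟙 = 0. Hence Π_X is the orthogonal projection of the space of symmetric matrices onto the tangent space of 𝕊ℙ_n at X with respect to the Fisher metric. -/

import Mathlib

open Matrix

/-! The correction `(α𝟙ᵀ + 𝟙αᵀ) ⊙ X` has row sums `α + Xα` because `X𝟙 = 𝟙`, so choosing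
`(I + X)α = Z𝟙` makes `Π_X(Z)𝟙 = 0`; `I + X` is invertible because it is strictly diagonally
dominant. In the Fisher metric the factor `X` of the correction cancels against the weight `1/X`,
so for symmetric `W` the pairing is `2 α ⬝ W𝟙`, which vanishes on the tangent space. -/

namespace Matrix

variable {ι : Type*} [Fintype ι]

theorem isUnit_one_add_of_mulVec_one_eq_one [DecidableEq ι] {X : Matrix ι ι ℝ}
    (hnonneg : ∀ i j, 0 ≤ X i j) (hdiag : ∀ i, 0 < X i i) (hrow : X *ᵥ 1 = 1) :
    IsUnit (1 + X) := by
  rw [isUnit_iff_isUnit_det, isUnit_iff_ne_zero]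
  refine det_ne_zero_of_sum_row_lt_diag fun k => ?_
  have hrow_k : ∑ j, X k j = 1 := by simpa [mulVec, dotProduct] using congrFun hrow k
  have hoff : ∑ j ∈ Finset.univ.erase k, ‖(1 + X) k j‖ = 1 - X k k := by
    rw [Finset.sum_congr rfl fun j hj => by
      rw [add_apply, one_apply_ne' (Finset.ne_of_mem_erase hj), zero_add,
        Real.norm_of_nonneg (hnonneg k j)]]
    rw [Finset.sum_erase_eq_sub (Finset.mem_univ k), hrow_k]
  have hdiag_norm : ‖(1 + X) k k‖ = 1 + X k k := by
    rw [add_apply, one_apply_eq, Real.norm_of_nonneg (by linarith [hdiag k])]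
  rw [hoff, hdiag_norm]
  linarith [hdiag k]

omit [Fintype ι] in
theorem isSymm_hadamard_vecMulVec_add {X : Matrix ι ι ℝ} (hX : X.IsSymm) (a : ι → ℝ) :
    ((vecMulVec a 1 + vecMulVec 1 a) ⊙ X).IsSymm := by
  have hsum : (vecMulVec a 1 + vecMulVec 1 a).IsSymm := by
    simpa only [transpose_vecMulVec] using isSymm_add_transpose_self (vecMulVec a 1)
  rw [IsSymm, transpose_hadamard, hsum.eq, hX.eq]

theorem hadamard_vecMulVec_add_mulVec_one (X : Matrix ι ι ℝ) (a : ι → ℝ) :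
    ((vecMulVec a 1 + vecMulVec 1 a) ⊙ X) *ᵥ 1 = a * (X *ᵥ 1) + X *ᵥ a := by
  ext i
  simp only [mulVec, dotProduct, hadamard_apply, add_apply, vecMulVec_apply, Pi.one_apply,
    Pi.mul_apply, Pi.add_apply, mul_one, one_mul, add_mul, Finset.sum_add_distrib,
    Finset.sum_mul, mul_comm (a _)]

theorem sum_hadamard_mul_div {X : Matrix ι ι ℝ} (hX : ∀ i j, X i j ≠ 0) (M W : Matrix ι ι ℝ) :
    ∑ i, ∑ j, (M ⊙ X) i j * W i j / X i j = ∑ i, ∑ j, M i j * W i j := by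
  refine Finset.sum_congr rfl fun i _ => Finset.sum_congr rfl fun j _ => ?_
  rw [hadamard_apply]
  field_simp [hX i j]

theorem sum_vecMulVec_mul (a b : ι → ℝ) (W : Matrix ι ι ℝ) :
    ∑ i, ∑ j, vecMulVec a b i j * W i j = a ⬝ᵥ (W *ᵥ b) := by
  simp only [vecMulVec_apply, dotProduct, mulVec, Finset.mul_sum]
  exact Finset.sum_congr rfl fun i _ => Finset.sum_congr rfl fun j _ => by ring

theorem sum_vecMulVec_add_mul_of_isSymm {W : Matrix ι ι ℝ} (hW : W.IsSymm) (a : ι → ℝ) :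
    ∑ i, ∑ j, (vecMulVec a 1 + vecMulVec 1 a : Matrix ι ι ℝ) i j * W i j = 2 * a ⬝ᵥ (W *ᵥ 1) := by
  have hswap : ∑ i, ∑ j, vecMulVec 1 a i j * W i j = ∑ i, ∑ j, vecMulVec a 1 i j * W i j := by
    rw [Finset.sum_comm]
    refine Finset.sum_congr rfl fun i _ => Finset.sum_congr rfl fun j _ => ?_
    rw [vecMulVec_apply, vecMulVec_apply, hW.apply]
    ring
  simp only [add_apply, add_mul, Finset.sum_add_distrib, hswap, sum_vecMulVec_mul]
  ring

end Matrix

/-- For `X ∈ 𝕊ℙ_n`, the matrix `I + X` is invertible, and for every symmetric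
`Z`, with `α = (I + X)⁻¹ Z𝟙`, the matrix `Π_X(Z) = Z − (α𝟙ᵀ + 𝟙αᵀ) ⊙ X` is a
symmetric tangent vector (`Π_X(Z)𝟙 = 0`) and the residual `Z − Π_X(Z)` is
Fisher-orthogonal to every symmetric `W` with `W𝟙 = 0`.  Hence `Π_X` is the
orthogonal projection onto the tangent space of `𝕊ℙ_n` at `X`. -/
theorem projection_tangent_symmetric_multinomial (n : ℕ)
    (X : Matrix (Fin n) (Fin n) ℝ)
    (hXpos : ∀ i j, 0 < X i j)
    (hXsym : X = Xᵀ)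
    (hXrow : X.mulVec (fun _ => (1 : ℝ)) = fun _ => (1 : ℝ)) :
    IsUnit (1 + X) ∧
    ∀ Z : Matrix (Fin n) (Fin n) ℝ, Z = Zᵀ →
      (Z - Matrix.hadamard
          (Matrix.vecMulVec ((1 + X)⁻¹.mulVec (Z.mulVec (fun _ => (1 : ℝ))))
              (fun _ => (1 : ℝ)) +
            Matrix.vecMulVec (fun _ => (1 : ℝ))
              ((1 + X)⁻¹.mulVec (Z.mulVec (fun _ => (1 : ℝ))))) X) =
        (Z - Matrix.hadamard
          (Matrix.vecMulVec ((1 + X)⁻¹.mulVec (Z.mulVec (fun _ => (1 : ℝ))))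
              (fun _ => (1 : ℝ)) +
            Matrix.vecMulVec (fun _ => (1 : ℝ))
              ((1 + X)⁻¹.mulVec (Z.mulVec (fun _ => (1 : ℝ))))) X)ᵀ ∧
      (Z - Matrix.hadamard
          (Matrix.vecMulVec ((1 + X)⁻¹.mulVec (Z.mulVec (fun _ => (1 : ℝ))))
              (fun _ => (1 : ℝ)) +
            Matrix.vecMulVec (fun _ => (1 : ℝ))
              ((1 + X)⁻¹.mulVec (Z.mulVec (fun _ => (1 : ℝ))))) X).mulVec
          (fun _ => (1 : ℝ)) = 0 ∧
      ∀ W : Matrix (Fin n) (Fin n) ℝ, W = Wᵀ →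
        W.mulVec (fun _ => (1 : ℝ)) = 0 →
        ∑ i, ∑ j,
          ((Matrix.hadamard
            (Matrix.vecMulVec ((1 + X)⁻¹.mulVec (Z.mulVec (fun _ => (1 : ℝ))))
                (fun _ => (1 : ℝ)) +
              Matrix.vecMulVec (fun _ => (1 : ℝ))
                ((1 + X)⁻¹.mulVec (Z.mulVec (fun _ => (1 : ℝ))))) X) i j * W i j)
            / X i j = 0 := by
  simp only [← Pi.one_def] at hXrow ⊢
  have hunit : IsUnit (1 + X) :=
    isUnit_one_add_of_mulVec_one_eq_one (fun i j => (hXpos i j).le) (fun i => hXpos i i) hXrow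
  refine ⟨hunit, fun Z hZ => ?_⟩
  set α := (1 + X)⁻¹ *ᵥ (Z *ᵥ 1)
  have hα : α + X *ᵥ α = Z *ᵥ 1 := by
    have : (1 + X) *ᵥ α = Z *ᵥ 1 := by
      rw [mulVec_mulVec, mul_nonsing_inv _ ((1 + X).isUnit_iff_isUnit_det.mp hunit), one_mulVec]
    rwa [add_mulVec, one_mulVec] at this
  refine ⟨(IsSymm.sub hZ.symm (isSymm_hadamard_vecMulVec_add hXsym.symm α)).symm, ?_,
    fun W hW hW1 => ?_⟩
  · rw [sub_mulVec, hadamard_vecMulVec_add_mulVec_one, hXrow, mul_one, hα, sub_self]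
  · rw [sum_hadamard_mul_div (fun i j => (hXpos i j).ne'),
      sum_vecMulVec_add_mul_of_isSymm hW.symm, hW1, dotProduct_zero, mul_zero]
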